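/- arXiv:1710.05286 — 11 statements merged into one kernel-verified Lean document; each statement's English description precedes it below -/
import Mathlib

section
/- Let A and B be nonempty subsets of a complete metric space (X,d), g : X → X self-cyclic with respect to A and B (i.e. g(A) ⊆ A and g(B) ⊆ B), with g(A) and g(B) closed in X. If F : X × X → X is a Banach type g-coupling with respect to A and B with constant k ∈ (0,1), then g(A) ∩ g(B) ≠ ∅. -/
theorem gA_inter_gB_nonempty {X : Type*} [MetricSpace X] [CompleteSpace X]
    (A B : Set X) (hA : A.Nonempty) (hB : B.Nonempty)
    (g : X → X) (hsc : g '' A ⊆ A ∧ g '' B ⊆ B)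
    (hclA : IsClosed (g '' A)) (hclB : IsClosed (g '' B))
    (F : X → X → X) (k : ℝ) (hk : k ∈ Set.Ioo (0:ℝ) 1)
    (hgc : ∀ x ∈ A, ∀ y ∈ B, F x y ∈ g '' A ∩ B ∧ F y x ∈ g '' B ∩ A)
    (hban : ∀ x ∈ A, ∀ v ∈ A, ∀ y ∈ B, ∀ u ∈ B,
      dist (F x y) (F u v) ≤ k / 2 * (dist (g x) (g u) + dist (g y) (g v))) :
    (g '' A ∩ g '' B).Nonempty := by
  obtain ⟨hk0, hk1⟩ := hk
  obtain ⟨a0, ha0⟩ := hA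
  obtain ⟨b0, hb0⟩ := hB
  have step : ∀ p : X × X, p.1 ∈ A → p.2 ∈ B →
      ∃ q : X × X, q.1 ∈ A ∧ q.2 ∈ B ∧ g q.1 = F p.1 p.2 ∧ g q.2 = F p.2 p.1 := by
    intro p h1 h2
    obtain ⟨⟨⟨a, ha, hga⟩, _⟩, ⟨⟨b, hb, hgb⟩, _⟩⟩ := hgc p.1 h1 p.2 h2
    exact ⟨(a, b), ha, hb, hga, hgb⟩
  choose f hfA hfB hfx hfy using step
  let s : ℕ → {p : X × X // p.1 ∈ A ∧ p.2 ∈ B} :=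
    fun n => Nat.rec ⟨(a0, b0), ha0, hb0⟩
      (fun _ q => ⟨f q.1 q.2.1 q.2.2, hfA q.1 q.2.1 q.2.2, hfB q.1 q.2.1 q.2.2⟩) n
  let x : ℕ → X := fun n => (s n).1.1
  let y : ℕ → X := fun n => (s n).1.2
  have hxA : ∀ n, x n ∈ A := fun n => (s n).2.1
  have hyB : ∀ n, y n ∈ B := fun n => (s n).2.2
  have hgx : ∀ n, g (x (n+1)) = F (x n) (y n) := fun n => hfx (s n).1 (s n).2.1 (s n).2.2
  have hgy : ∀ n, g (y (n+1)) = F (y n) (x n) := fun n => hfy (s n).1 (s n).2.1 (s n).2.2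
  set u : ℕ → X := fun n => g (x n) with hu
  set v : ℕ → X := fun n => g (y n) with hv
  -- contraction estimates
  have hp : ∀ n, dist (u (n+1)) (v (n+1)) ≤ k * dist (u n) (v n) := by
    intro n
    have h := hban (x n) (hxA n) (x n) (hxA n) (y n) (hyB n) (y n) (hyB n)
    simp only [hu, hv, hgx n, hgy n]
    have hc : dist (g (y n)) (g (x n)) = dist (g (x n)) (g (y n)) := dist_comm _ _
    calc dist (F (x n) (y n)) (F (y n) (x n))
        ≤ k / 2 * (dist (g (x n)) (g (y n)) + dist (g (y n)) (g (x n))) := h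
      _ = k * dist (g (x n)) (g (y n)) := by rw [hc]; ring
  have hqr : ∀ n, dist (u (n+2)) (v (n+1)) + dist (v (n+2)) (u (n+1)) ≤
      k * (dist (u (n+1)) (v n) + dist (v (n+1)) (u n)) := by
    intro n
    have h1 := hban (x (n+1)) (hxA (n+1)) (x n) (hxA n) (y (n+1)) (hyB (n+1)) (y n) (hyB n)
    have h2 := hban (x n) (hxA n) (x (n+1)) (hxA (n+1)) (y n) (hyB n) (y (n+1)) (hyB (n+1))
    have e1 : dist (u (n+2)) (v (n+1)) ≤
        k / 2 * (dist (g (x (n+1))) (g (y n)) + dist (g (y (n+1))) (g (x n))) := by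
      simpa only [hu, hv, hgx (n+1), hgy n] using h1
    have e2 : dist (v (n+2)) (u (n+1)) ≤
        k / 2 * (dist (g (x n)) (g (y (n+1))) + dist (g (y n)) (g (x (n+1)))) := by
      have := h2
      rw [dist_comm (F (x n) (y n)) (F (y (n+1)) (x (n+1)))] at this
      simpa only [hu, hv, hgy (n+1), hgx n] using this
    have c1 : dist (g (x n)) (g (y (n+1))) = dist (v (n+1)) (u n) := dist_comm _ _
    have c2 : dist (g (y n)) (g (x (n+1))) = dist (u (n+1)) (v n) := dist_comm _ _
    have c3 : dist (g (x (n+1))) (g (y n)) = dist (u (n+1)) (v n) := rfl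
    have c4 : dist (g (y (n+1))) (g (x n)) = dist (v (n+1)) (u n) := rfl
    rw [c3, c4] at e1
    rw [c1, c2] at e2
    linarith
  set P : ℝ := dist (u 0) (v 0) with hP
  set S : ℝ := dist (u 1) (v 0) + dist (v 1) (u 0) with hS
  have hpn : ∀ n, dist (u n) (v n) ≤ P * k ^ n := by
    intro n
    induction n with
    | zero => simp [hP]
    | succ m ih =>
      calc dist (u (m+1)) (v (m+1)) ≤ k * dist (u m) (v m) := hp m
        _ ≤ k * (P * k ^ m) := by nlinarith
        _ = P * k ^ (m+1) := by ring
  have hsn : ∀ n, dist (u (n+1)) (v n) + dist (v (n+1)) (u n) ≤ S * k ^ n := by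
    intro n
    induction n with
    | zero => simp [hS]
    | succ m ih =>
      calc dist (u (m+2)) (v (m+1)) + dist (v (m+2)) (u (m+1))
          ≤ k * (dist (u (m+1)) (v m) + dist (v (m+1)) (u m)) := hqr m
        _ ≤ k * (S * k ^ m) := by nlinarith
        _ = S * k ^ (m+1) := by ring
  have hCu : ∀ n, dist (u n) (u (n+1)) ≤ (P + S) * k ^ n := by
    intro n
    have t : dist (u n) (u (n+1)) ≤ dist (u n) (v n) + dist (v n) (u (n+1)) :=
      dist_triangle _ _ _
    have c : dist (v n) (u (n+1)) = dist (u (n+1)) (v n) := dist_comm _ _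
    have h1 := hpn n
    have h2 := hsn n
    have h3 : dist (v (n+1)) (u n) ≥ 0 := dist_nonneg
    rw [c] at t
    nlinarith
  have hCv : ∀ n, dist (v n) (v (n+1)) ≤ (P + S) * k ^ n := by
    intro n
    have t : dist (v n) (v (n+1)) ≤ dist (v n) (u n) + dist (u n) (v (n+1)) :=
      dist_triangle _ _ _
    have c1 : dist (v n) (u n) = dist (u n) (v n) := dist_comm _ _
    have c2 : dist (u n) (v (n+1)) = dist (v (n+1)) (u n) := dist_comm _ _
    have h1 := hpn n
    have h2 := hsn n
    have h3 : dist (u (n+1)) (v n) ≥ 0 := dist_nonneg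
    rw [c1, c2] at t
    nlinarith
  have hcu : CauchySeq u := cauchySeq_of_le_geometric k (P + S) hk1 hCu
  have hcv : CauchySeq v := cauchySeq_of_le_geometric k (P + S) hk1 hCv
  obtain ⟨z, hz⟩ := cauchySeq_tendsto_of_complete hcu
  obtain ⟨w, hw⟩ := cauchySeq_tendsto_of_complete hcv
  have hzw : z = w := by
    have hd : Filter.Tendsto (fun n => dist (u n) (v n)) Filter.atTop (nhds (dist z w)) :=
      hz.dist hw
    have h0 : Filter.Tendsto (fun n => P * k ^ n) Filter.atTop (nhds 0) := by
      have := tendsto_pow_atTop_nhds_zero_of_lt_one hk0.le hk1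
      simpa using this.const_mul P
    have hle : dist z w ≤ 0 := by
      have : Filter.Tendsto (fun n : ℕ => (0:ℝ)) Filter.atTop (nhds 0) := tendsto_const_nhds
      exact le_of_tendsto_of_tendsto hd h0 (Filter.eventually_atTop.2 ⟨0, fun n _ => hpn n⟩)
    exact dist_le_zero.mp hle
  refine ⟨z, ?_, ?_⟩
  · exact hclA.mem_of_tendsto hz (Filter.Eventually.of_forall fun n => ⟨x n, hxA n, rfl⟩)
  · rw [hzw]
    exact hclB.mem_of_tendsto hw (Filter.Eventually.of_forall fun n => ⟨y n, hyB n, rfl⟩)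
end

section
/- Let A and B be nonempty subsets of a complete metric space (X,d), g : X → X self-cyclic with respect to A and B, with g(A) and g(B) closed. If F : X × X → X is a Banach type g-coupling with respect to A and B with constant k ∈ (0,1), then there exist a ∈ A and b ∈ B such that F(a,b) = g(a) and F(b,a) = g(b), i.e., F and g have a coupled coincidence point in A × B. -/
open Filter Topology

theorem coupled_coincidence_point_exists {X : Type*} [MetricSpace X] [CompleteSpace X]
    (A B : Set X) (hA : A.Nonempty) (hB : B.Nonempty)
    (g : X → X) (hsc : g '' A ⊆ A ∧ g '' B ⊆ B)
    (hclA : IsClosed (g '' A)) (hclB : IsClosed (g '' B))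
    (F : X → X → X) (k : ℝ) (hk : k ∈ Set.Ioo (0:ℝ) 1)
    (hgc : ∀ x ∈ A, ∀ y ∈ B, F x y ∈ g '' A ∩ B ∧ F y x ∈ g '' B ∩ A)
    (hban : ∀ x ∈ A, ∀ v ∈ A, ∀ y ∈ B, ∀ u ∈ B,
      dist (F x y) (F u v) ≤ k / 2 * (dist (g x) (g u) + dist (g y) (g v))) :
    ∃ a ∈ A, ∃ b ∈ B, F a b = g a ∧ F b a = g b := by
  obtain ⟨hk0, hk1⟩ := hk
  obtain ⟨x0, hx0⟩ := hA
  obtain ⟨y0, hy0⟩ := hB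
  -- step function producing the next pair
  have hstep : ∀ p : {p : X × X // p.1 ∈ A ∧ p.2 ∈ B},
      ∃ q : {p : X × X // p.1 ∈ A ∧ p.2 ∈ B},
        g q.1.1 = F p.1.1 p.1.2 ∧ g q.1.2 = F p.1.2 p.1.1 := by
    rintro ⟨⟨a, b⟩, ha, hb⟩
    obtain ⟨h1, h2⟩ := hgc a ha b hb
    obtain ⟨⟨a', ha', hga'⟩, _⟩ := h1
    obtain ⟨⟨b', hb', hgb'⟩, _⟩ := h2
    exact ⟨⟨(a', b'), ha', hb'⟩, hga', hgb'⟩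
  choose nxt hn1 hn2 using hstep
  set S : ℕ → {p : X × X // p.1 ∈ A ∧ p.2 ∈ B} :=
    fun n => nxt^[n] ⟨(x0, y0), hx0, hy0⟩ with hS
  set x : ℕ → X := fun n => (S n).1.1 with hxdef
  set y : ℕ → X := fun n => (S n).1.2 with hydef
  have hxA : ∀ n, x n ∈ A := fun n => (S n).2.1
  have hyB : ∀ n, y n ∈ B := fun n => (S n).2.2
  have hSsucc : ∀ n, S (n+1) = nxt (S n) := by
    intro n; simp [hS, Function.iterate_succ_apply']
  have hxg : ∀ n, g (x (n+1)) = F (x n) (y n) := by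
    intro n; rw [hxdef]; simp only [hSsucc n]; exact hn1 (S n)
  have hyg : ∀ n, g (y (n+1)) = F (y n) (x n) := by
    intro n; rw [hydef]; simp only [hSsucc n]; exact hn2 (S n)
  set gx : ℕ → X := fun n => g (x n) with hgx
  set gy : ℕ → X := fun n => g (y n) with hgy
  -- δ_n = dist (gx n) (gy n) decays geometrically
  have hδstep : ∀ n, dist (gx (n+1)) (gy (n+1)) ≤ k * dist (gx n) (gy n) := by
    intro n
    have h := hban (x n) (hxA n) (x n) (hxA n) (y n) (hyB n) (y n) (hyB n)
    rw [hgx, hgy]; simp only [hxg n, hyg n]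
    calc dist (F (x n) (y n)) (F (y n) (x n))
        ≤ k / 2 * (dist (g (x n)) (g (y n)) + dist (g (y n)) (g (x n))) := h
      _ = k * dist (g (x n)) (g (y n)) := by rw [dist_comm (g (y n))]; ring
  have hδ : ∀ n, dist (gx n) (gy n) ≤ k ^ n * dist (gx 0) (gy 0) := by
    intro n
    induction n with
    | zero => simp
    | succ m ih =>
        calc dist (gx (m+1)) (gy (m+1)) ≤ k * dist (gx m) (gy m) := hδstep m
          _ ≤ k * (k ^ m * dist (gx 0) (gy 0)) := by
              exact mul_le_mul_of_nonneg_left ih hk0.le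
          _ = k ^ (m+1) * dist (gx 0) (gy 0) := by ring
  -- cross sums s_n decay geometrically
  set s : ℕ → ℝ := fun n => dist (gx (n+1)) (gy n) + dist (gy (n+1)) (gx n) with hs
  have hsstep : ∀ n, s (n+1) ≤ k * s n := by
    intro n
    have h1 := hban (x (n+1)) (hxA (n+1)) (x n) (hxA n) (y (n+1)) (hyB (n+1)) (y n) (hyB n)
    have h2 := hban (x n) (hxA n) (x (n+1)) (hxA (n+1)) (y n) (hyB n) (y (n+1)) (hyB (n+1))
    have e1 : dist (gx (n+2)) (gy (n+1)) ≤ k / 2 * s n := by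
      rw [hgx, hgy]; simp only [hxg (n+1), hyg n]
      calc dist (F (x (n+1)) (y (n+1))) (F (y n) (x n))
          ≤ k / 2 * (dist (g (x (n+1))) (g (y n)) + dist (g (y (n+1))) (g (x n))) := h1
        _ = k / 2 * s n := rfl
    have e2 : dist (gy (n+2)) (gx (n+1)) ≤ k / 2 * s n := by
      rw [hgx, hgy]; simp only [hyg (n+1), hxg n]
      calc dist (F (y (n+1)) (x (n+1))) (F (x n) (y n))
          = dist (F (x n) (y n)) (F (y (n+1)) (x (n+1))) := dist_comm _ _
        _ ≤ k / 2 * (dist (g (x n)) (g (y (n+1))) + dist (g (y n)) (g (x (n+1)))) := h2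
        _ = k / 2 * s n := by
            rw [hs]; simp only [hgx, hgy]
            rw [dist_comm (g (x n)) (g (y (n+1))), dist_comm (g (y n)) (g (x (n+1)))]
            ring
    calc s (n+1) = dist (gx (n+2)) (gy (n+1)) + dist (gy (n+2)) (gx (n+1)) := rfl
      _ ≤ k / 2 * s n + k / 2 * s n := add_le_add e1 e2
      _ = k * s n := by ring
  have hsn : ∀ n, s n ≤ k ^ n * s 0 := by
    intro n
    induction n with
    | zero => simp
    | succ m ih =>
        calc s (m+1) ≤ k * s m := hsstep m
          _ ≤ k * (k ^ m * s 0) := mul_le_mul_of_nonneg_left ih hk0.le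
          _ = k ^ (m+1) * s 0 := by ring
  -- Cauchy sequences
  set C : ℝ := dist (gx 0) (gy 0) + s 0 with hC
  have hxc : ∀ n, dist (gx n) (gx (n+1)) ≤ C * k ^ n := by
    intro n
    calc dist (gx n) (gx (n+1))
        ≤ dist (gx n) (gy n) + dist (gy n) (gx (n+1)) := dist_triangle _ _ _
      _ ≤ k ^ n * dist (gx 0) (gy 0) + k ^ n * s 0 := by
          refine add_le_add (hδ n) ?_
          calc dist (gy n) (gx (n+1)) = dist (gx (n+1)) (gy n) := dist_comm _ _
            _ ≤ s n := le_add_of_nonneg_right dist_nonneg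
            _ ≤ k ^ n * s 0 := hsn n
      _ = C * k ^ n := by rw [hC]; ring
  have hyc : ∀ n, dist (gy n) (gy (n+1)) ≤ C * k ^ n := by
    intro n
    calc dist (gy n) (gy (n+1))
        ≤ dist (gy n) (gx n) + dist (gx n) (gy (n+1)) := dist_triangle _ _ _
      _ ≤ k ^ n * dist (gx 0) (gy 0) + k ^ n * s 0 := by
          refine add_le_add ?_ ?_
          · rw [dist_comm]; exact hδ n
          · calc dist (gx n) (gy (n+1)) = dist (gy (n+1)) (gx n) := dist_comm _ _
              _ ≤ s n := le_add_of_nonneg_left dist_nonneg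
              _ ≤ k ^ n * s 0 := hsn n
      _ = C * k ^ n := by rw [hC]; ring
  have hxcauchy : CauchySeq gx := cauchySeq_of_le_geometric k C hk1 hxc
  have hycauchy : CauchySeq gy := cauchySeq_of_le_geometric k C hk1 hyc
  obtain ⟨p, hp⟩ := cauchySeq_tendsto_of_complete hxcauchy
  obtain ⟨q, hq⟩ := cauchySeq_tendsto_of_complete hycauchy
  -- geometric sequences tend to 0
  have hkpow : Tendsto (fun n : ℕ => k ^ n) atTop (𝓝 0) :=
    tendsto_pow_atTop_nhds_zero_of_lt_one hk0.le hk1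
  -- p = q
  have hpq : p = q := by
    have h1 : Tendsto (fun n => dist (gx n) (gy n)) atTop (𝓝 (dist p q)) := hp.dist hq
    have h2 : Tendsto (fun n => dist (gx n) (gy n)) atTop (𝓝 0) := by
      apply squeeze_zero (fun n => dist_nonneg) hδ
      simpa using hkpow.mul_const (dist (gx 0) (gy 0))
    have := tendsto_nhds_unique h1 h2
    exact eq_of_dist_eq_zero this
  -- p lies in g '' A and g '' B
  have hpA : p ∈ g '' A := hclA.mem_of_tendsto hp (Eventually.of_forall fun n => ⟨x n, hxA n, rfl⟩)
  have hqB : q ∈ g '' B := hclB.mem_of_tendsto hq (Eventually.of_forall fun n => ⟨y n, hyB n, rfl⟩)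
  obtain ⟨a, haA, hga⟩ := hpA
  obtain ⟨b, hbB, hgb⟩ := hqB
  refine ⟨a, haA, b, hbB, ?_, ?_⟩
  · -- F a b = g a
    have hq1 : Tendsto (fun n => gy (n+1)) atTop (𝓝 q) := hq.comp (tendsto_add_atTop_nat 1)
    have hbound : ∀ n, dist (gy (n+1)) (F a b) ≤
        k / 2 * (dist (g a) (gy n) + dist (g b) (gx n)) := by
      intro n
      have h := hban a haA (x n) (hxA n) b hbB (y n) (hyB n)
      rw [dist_comm, hgy]; simp only [hyg n]
      exact h
    have hrhs : Tendsto (fun n => k / 2 * (dist (g a) (gy n) + dist (g b) (gx n)))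
        atTop (𝓝 0) := by
      have h1 : Tendsto (fun n => dist (g a) (gy n)) atTop (𝓝 (dist (g a) q)) :=
        tendsto_const_nhds.dist hq
      have h2 : Tendsto (fun n => dist (g b) (gx n)) atTop (𝓝 (dist (g b) p)) :=
        tendsto_const_nhds.dist hp
      have : dist (g a) q + dist (g b) p = 0 := by
        rw [hga, hgb, hpq]; simp
      simpa [this] using (tendsto_const_nhds (x := k/2)).mul (h1.add h2)
    have h0 : Tendsto (fun n => dist (gy (n+1)) (F a b)) atTop (𝓝 0) :=
      squeeze_zero (fun n => dist_nonneg) hbound hrhs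
    have hlim : Tendsto (fun n => gy (n+1)) atTop (𝓝 (F a b)) :=
      tendsto_iff_dist_tendsto_zero.2 h0
    have := tendsto_nhds_unique hlim hq1
    rw [this, ← hpq, ← hga]
  · -- F b a = g b
    have hp1 : Tendsto (fun n => gx (n+1)) atTop (𝓝 p) := hp.comp (tendsto_add_atTop_nat 1)
    have hbound : ∀ n, dist (gx (n+1)) (F b a) ≤
        k / 2 * (dist (gx n) (g b) + dist (gy n) (g a)) := by
      intro n
      have h := hban (x n) (hxA n) a haA (y n) (hyB n) b hbB
      rw [hgx]; simp only [hxg n]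
      exact h
    have hrhs : Tendsto (fun n => k / 2 * (dist (gx n) (g b) + dist (gy n) (g a)))
        atTop (𝓝 0) := by
      have h1 : Tendsto (fun n => dist (gx n) (g b)) atTop (𝓝 (dist p (g b))) :=
        hp.dist tendsto_const_nhds
      have h2 : Tendsto (fun n => dist (gy n) (g a)) atTop (𝓝 (dist q (g a))) :=
        hq.dist tendsto_const_nhds
      have : dist p (g b) + dist q (g a) = 0 := by
        rw [hga, hgb, hpq]; simp
      simpa [this] using (tendsto_const_nhds (x := k/2)).mul (h1.add h2)
    have h0 : Tendsto (fun n => dist (gx (n+1)) (F b a)) atTop (𝓝 0) :=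
      squeeze_zero (fun n => dist_nonneg) hbound hrhs
    have hlim : Tendsto (fun n => gx (n+1)) atTop (𝓝 (F b a)) :=
      tendsto_iff_dist_tendsto_zero.2 h0
    have := tendsto_nhds_unique hlim hp1
    rw [this, hpq, ← hgb]
end

section
/- Under the hypotheses of the coupled coincidence theorem (complete metric space X, g self-cyclic w.r.t. nonempty subsets A and B, g(A) and g(B) closed, F a Banach type g-coupling with constant k ∈ (0,1)), there exists a coupled coincidence point (a,b) ∈ A × B of F and g satisfying additionally g(a) = g(b), and consequently F(a,b) = F(b,a). -/
theorem coupled_coincidence_point_symmetric {X : Type*} [MetricSpace X] [CompleteSpace X]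
    (A B : Set X) (hA : A.Nonempty) (hB : B.Nonempty)
    (g : X → X) (hsc : g '' A ⊆ A ∧ g '' B ⊆ B)
    (hclA : IsClosed (g '' A)) (hclB : IsClosed (g '' B))
    (F : X → X → X) (k : ℝ) (hk : k ∈ Set.Ioo (0:ℝ) 1)
    (hgc : ∀ x ∈ A, ∀ y ∈ B, F x y ∈ g '' A ∩ B ∧ F y x ∈ g '' B ∩ A)
    (hban : ∀ x ∈ A, ∀ v ∈ A, ∀ y ∈ B, ∀ u ∈ B,
      dist (F x y) (F u v) ≤ k / 2 * (dist (g x) (g u) + dist (g y) (g v))) :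
    ∃ a ∈ A, ∃ b ∈ B, F a b = g a ∧ F b a = g b ∧ g a = g b ∧ F a b = F b a := by
  obtain ⟨hk0, hk1⟩ := hk
  obtain ⟨a0, ha0⟩ := hA
  obtain ⟨b0, hb0⟩ := hB
  have hstep : ∀ p : {p : X × X // p.1 ∈ A ∧ p.2 ∈ B},
      ∃ q : {q : X × X // q.1 ∈ A ∧ q.2 ∈ B},
        g q.1.1 = F p.1.1 p.1.2 ∧ g q.1.2 = F p.1.2 p.1.1 := by
    rintro ⟨⟨x, y⟩, hx, hy⟩
    obtain ⟨h1, h2⟩ := hgc x hx y hy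
    obtain ⟨x', hx', hgx'⟩ := h1.1
    obtain ⟨y', hy', hgy'⟩ := h2.1
    exact ⟨⟨(x', y'), hx', hy'⟩, hgx', hgy'⟩
  choose f hf1 hf2 using hstep
  let seq : ℕ → {p : X × X // p.1 ∈ A ∧ p.2 ∈ B} :=
    fun n => f^[n] ⟨(a0, b0), ha0, hb0⟩
  let x : ℕ → X := fun n => (seq n).1.1
  let y : ℕ → X := fun n => (seq n).1.2
  have hxA : ∀ n, x n ∈ A := fun n => (seq n).2.1
  have hyB : ∀ n, y n ∈ B := fun n => (seq n).2.2
  have hseqsucc : ∀ n, seq (n+1) = f (seq n) := fun n =>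
    Function.iterate_succ_apply' f n _
  have hrec1 : ∀ n, g (x (n+1)) = F (x n) (y n) := by
    intro n
    show g (seq (n+1)).1.1 = _
    rw [hseqsucc n]
    exact hf1 (seq n)
  have hrec2 : ∀ n, g (y (n+1)) = F (y n) (x n) := by
    intro n
    show g (seq (n+1)).1.2 = _
    rw [hseqsucc n]
    exact hf2 (seq n)
  set u : ℕ → X := fun n => g (x n) with hu_def
  set v : ℕ → X := fun n => g (y n) with hv_def
  -- a_n : dist (u n) (v n) ≤ k^n * a0
  have ha : ∀ n, dist (u n) (v n) ≤ k ^ n * dist (u 0) (v 0) := by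
    intro n
    induction n with
    | zero => simp
    | succ n ih =>
      have h1 : dist (u (n+1)) (v (n+1)) ≤ k * dist (u n) (v n) := by
        have := hban (x n) (hxA n) (x n) (hxA n) (y n) (hyB n) (y n) (hyB n)
        rw [dist_comm (g (y n)) (g (x n))] at this
        calc dist (u (n+1)) (v (n+1)) = dist (F (x n) (y n)) (F (y n) (x n)) := by
              simp only [u, v, hrec1, hrec2]
          _ ≤ k / 2 * (dist (g (x n)) (g (y n)) + dist (g (x n)) (g (y n))) := this
          _ = k * dist (u n) (v n) := by ring
      calc dist (u (n+1)) (v (n+1)) ≤ k * dist (u n) (v n) := h1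
        _ ≤ k * (k ^ n * dist (u 0) (v 0)) := by
            exact mul_le_mul_of_nonneg_left ih (le_of_lt hk0)
        _ = k ^ (n+1) * dist (u 0) (v 0) := by ring
  -- s_n
  set S : ℕ → ℝ := fun n => dist (u n) (v (n+1)) + dist (v n) (u (n+1)) with hS_def
  have hs : ∀ n, S (n+1) ≤ k * S n := by
    intro n
    have h1 : dist (u (n+1)) (v (n+2)) ≤ k / 2 * S n := by
      have := hban (x n) (hxA n) (x (n+1)) (hxA (n+1)) (y n) (hyB n) (y (n+1)) (hyB (n+1))
      calc dist (u (n+1)) (v (n+2)) = dist (F (x n) (y n)) (F (y (n+1)) (x (n+1))) := by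
            simp only [u, v, hrec1, hrec2]
        _ ≤ k / 2 * (dist (g (x n)) (g (y (n+1))) + dist (g (y n)) (g (x (n+1)))) := this
        _ = k / 2 * S n := rfl
    have h2 : dist (v (n+1)) (u (n+2)) ≤ k / 2 * S n := by
      have := hban (x (n+1)) (hxA (n+1)) (x n) (hxA n) (y (n+1)) (hyB (n+1)) (y n) (hyB n)
      calc dist (v (n+1)) (u (n+2))
            = dist (F (x (n+1)) (y (n+1))) (F (y n) (x n)) := by
            simp only [u, v, hrec1, hrec2]; rw [dist_comm]
        _ ≤ k / 2 * (dist (g (x (n+1))) (g (y n)) + dist (g (y (n+1))) (g (x n))) := this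
        _ = k / 2 * S n := by
            simp only [S, hS_def]
            rw [dist_comm (g (x (n+1))) (g (y n)), dist_comm (g (y (n+1))) (g (x n))]
            ring
    calc S (n+1) ≤ k / 2 * S n + k / 2 * S n := add_le_add h1 h2
      _ = k * S n := by ring
  have hSgeo : ∀ n, S n ≤ k ^ n * S 0 := by
    intro n
    induction n with
    | zero => simp
    | succ n ih =>
      calc S (n+1) ≤ k * S n := hs n
        _ ≤ k * (k ^ n * S 0) := mul_le_mul_of_nonneg_left ih (le_of_lt hk0)
        _ = k ^ (n+1) * S 0 := by ring
  -- Cauchy bound for u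
  have hC : ∀ n, dist (u n) (u (n+1)) ≤ (S 0 + dist (u 0) (v 0)) * k ^ n := by
    intro n
    have hkn : (0:ℝ) ≤ k ^ n := pow_nonneg (le_of_lt hk0) n
    calc dist (u n) (u (n+1)) ≤ dist (u n) (v (n+1)) + dist (v (n+1)) (u (n+1)) := dist_triangle _ _ _
      _ ≤ S n + dist (u (n+1)) (v (n+1)) := by
          rw [dist_comm (v (n+1))]
          have : dist (u n) (v (n+1)) ≤ S n := le_add_of_nonneg_right dist_nonneg
          linarith
      _ ≤ k ^ n * S 0 + k ^ (n+1) * dist (u 0) (v 0) := add_le_add (hSgeo n) (ha (n+1))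
      _ ≤ k ^ n * S 0 + k ^ n * dist (u 0) (v 0) := by
          have : k ^ (n+1) ≤ k ^ n := by
            calc k ^ (n+1) = k ^ n * k := by ring
              _ ≤ k ^ n * 1 := mul_le_mul_of_nonneg_left (le_of_lt hk1) hkn
              _ = k ^ n := mul_one _
          have hd : (0:ℝ) ≤ dist (u 0) (v 0) := dist_nonneg
          nlinarith
      _ = (S 0 + dist (u 0) (v 0)) * k ^ n := by ring
  have hcauchy : CauchySeq u := cauchySeq_of_le_geometric k _ hk1 hC
  obtain ⟨p, hp⟩ := cauchySeq_tendsto_of_complete hcauchy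
  have hk_to0 : Filter.Tendsto (fun n => k ^ n) Filter.atTop (nhds 0) :=
    tendsto_pow_atTop_nhds_zero_of_lt_one (le_of_lt hk0) hk1
  -- dist (u n) (v n) → 0
  have hdist0 : Filter.Tendsto (fun n => dist (u n) (v n)) Filter.atTop (nhds 0) := by
    apply squeeze_zero (fun n => dist_nonneg) ha
    simpa using hk_to0.mul_const (dist (u 0) (v 0))
  have hv : Filter.Tendsto v Filter.atTop (nhds p) := by
    rw [tendsto_iff_dist_tendsto_zero]
    apply squeeze_zero (fun n => dist_nonneg)
      (fun n => dist_triangle_left (v n) p (u n))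
    have h2 : Filter.Tendsto (fun n => dist (u n) p) Filter.atTop (nhds 0) := by
      rw [← tendsto_iff_dist_tendsto_zero]; exact hp
    simpa using hdist0.add h2
  -- limits in closed sets
  have hpA : p ∈ g '' A :=
    hclA.mem_of_tendsto hp (Filter.Eventually.of_forall fun n => ⟨x n, hxA n, rfl⟩)
  have hpB : p ∈ g '' B :=
    hclB.mem_of_tendsto hv (Filter.Eventually.of_forall fun n => ⟨y n, hyB n, rfl⟩)
  obtain ⟨a, haA, hga⟩ := hpA
  obtain ⟨b, hbB, hgb⟩ := hpB
  -- dist p (u n), dist p (v n) → 0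
  have hup : Filter.Tendsto (fun n => dist p (u n)) Filter.atTop (nhds 0) := by
    have := (tendsto_const_nhds (x := p) (f := Filter.atTop (α := ℕ))).dist hp
    simpa using this
  have hvp : Filter.Tendsto (fun n => dist p (v n)) Filter.atTop (nhds 0) := by
    have := (tendsto_const_nhds (x := p) (f := Filter.atTop (α := ℕ))).dist hv
    simpa using this
  have hbound : Filter.Tendsto (fun n => k / 2 * (dist p (v n) + dist p (u n)))
      Filter.atTop (nhds 0) := by
    have := (hvp.add hup).const_mul (k / 2)
    simpa using this
  -- F a b = p
  have hFab : F a b = p := by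
    have hvs : Filter.Tendsto (fun n => v (n+1)) Filter.atTop (nhds p) :=
      hv.comp (Filter.tendsto_add_atTop_nat 1)
    have hvs' : Filter.Tendsto (fun n => v (n+1)) Filter.atTop (nhds (F a b)) := by
      rw [tendsto_iff_dist_tendsto_zero]
      apply squeeze_zero (fun n => dist_nonneg) _ hbound
      intro n
      have hb := hban a haA (x n) (hxA n) b hbB (y n) (hyB n)
      rw [hga, hgb] at hb
      calc dist (v (n+1)) (F a b) = dist (F a b) (F (y n) (x n)) := by
            rw [dist_comm]; simp only [v, hrec2]
        _ ≤ k / 2 * (dist p (g (y n)) + dist p (g (x n))) := hb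
        _ = k / 2 * (dist p (v n) + dist p (u n)) := rfl
    exact tendsto_nhds_unique hvs' hvs
  -- F b a = p
  have hFba : F b a = p := by
    have hus : Filter.Tendsto (fun n => u (n+1)) Filter.atTop (nhds p) :=
      hp.comp (Filter.tendsto_add_atTop_nat 1)
    have hus' : Filter.Tendsto (fun n => u (n+1)) Filter.atTop (nhds (F b a)) := by
      rw [tendsto_iff_dist_tendsto_zero]
      apply squeeze_zero (fun n => dist_nonneg) _ hbound
      intro n
      have hb := hban (x n) (hxA n) a haA (y n) (hyB n) b hbB
      rw [hga, hgb] at hb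
      calc dist (u (n+1)) (F b a) = dist (F (x n) (y n)) (F b a) := by
            simp only [u, hrec1]
        _ ≤ k / 2 * (dist (g (x n)) p + dist (g (y n)) p) := hb
        _ = k / 2 * (dist p (v n) + dist p (u n)) := by
            rw [dist_comm (g (x n)) p, dist_comm (g (y n)) p]
            show k / 2 * (dist p (u n) + dist p (v n)) = _
            ring
    exact tendsto_nhds_unique hus' hus
  exact ⟨a, haA, b, hbB, by rw [hFab, hga], by rw [hFba, hgb], by rw [hga, hgb],
    by rw [hFab, hFba]⟩
end

section
/- Let A and B be nonempty subsets of a complete metric space (X,d), g : X → X self-cyclic with respect to A and B and injective, with g(A) and g(B) closed. If F : X × X → X is a Banach type g-coupling with respect to A and B with constant k ∈ (0,1), then A ∩ B ≠ ∅. -/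
open Filter Topology

theorem A_inter_B_nonempty {X : Type*} [MetricSpace X] [CompleteSpace X]
    (A B : Set X) (hA : A.Nonempty) (hB : B.Nonempty)
    (g : X → X) (hginj : Function.Injective g)
    (hsc : g '' A ⊆ A ∧ g '' B ⊆ B)
    (hclA : IsClosed (g '' A)) (hclB : IsClosed (g '' B))
    (F : X → X → X) (k : ℝ) (hk : k ∈ Set.Ioo (0:ℝ) 1)
    (hgc : ∀ x ∈ A, ∀ y ∈ B, F x y ∈ g '' A ∩ B ∧ F y x ∈ g '' B ∩ A)
    (hban : ∀ x ∈ A, ∀ v ∈ A, ∀ y ∈ B, ∀ u ∈ B,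
      dist (F x y) (F u v) ≤ k / 2 * (dist (g x) (g u) + dist (g y) (g v))) :
    (A ∩ B).Nonempty := by
  obtain ⟨hk0, hk1⟩ := hk
  obtain ⟨x0, hx0⟩ := hA
  obtain ⟨y0, hy0⟩ := hB
  have step : ∀ p : {p : X × X // p.1 ∈ A ∧ p.2 ∈ B},
      ∃ q : {p : X × X // p.1 ∈ A ∧ p.2 ∈ B},
        g q.1.1 = F p.1.1 p.1.2 ∧ g q.1.2 = F p.1.2 p.1.1 := by
    rintro ⟨⟨x, y⟩, hx, hy⟩
    obtain ⟨⟨x', hx'A, hgx'⟩, -⟩ := (hgc x hx y hy).1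
    obtain ⟨⟨y', hy'B, hgy'⟩, -⟩ := (hgc x hx y hy).2
    exact ⟨⟨(x', y'), hx'A, hy'B⟩, hgx', hgy'⟩
  choose next h1 h2 using step
  set s : ℕ → {p : X × X // p.1 ∈ A ∧ p.2 ∈ B} :=
    fun n => next^[n] ⟨(x0, y0), hx0, hy0⟩ with hs
  have hsucc : ∀ n, s (n + 1) = next (s n) := fun n => by
    simp only [hs, Function.iterate_succ_apply']
  set x : ℕ → X := fun n => (s n).1.1 with hxdef
  set y : ℕ → X := fun n => (s n).1.2 with hydef
  have hxA : ∀ n, x n ∈ A := fun n => (s n).2.1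
  have hyB : ∀ n, y n ∈ B := fun n => (s n).2.2
  have hgx : ∀ n, g (x (n + 1)) = F (x n) (y n) := fun n => by
    show g ((s (n + 1)).1.1) = F ((s n).1.1) ((s n).1.2)
    rw [hsucc n]; exact h1 (s n)
  have hgy : ∀ n, g (y (n + 1)) = F (y n) (x n) := fun n => by
    show g ((s (n + 1)).1.2) = F ((s n).1.2) ((s n).1.1)
    rw [hsucc n]; exact h2 (s n)
  -- a n : distance between the two sequences
  set a : ℕ → ℝ := fun n => dist (g (x n)) (g (y n)) with hadef
  set t : ℕ → ℝ := fun n =>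
    dist (g (x (n + 1))) (g (y n)) + dist (g (y (n + 1))) (g (x n)) with htdef
  have ha_step : ∀ n, a (n + 1) ≤ k * a n := by
    intro n
    have := hban (x n) (hxA n) (x n) (hxA n) (y n) (hyB n) (y n) (hyB n)
    simp only [hadef, hgx, hgy]
    calc dist (F (x n) (y n)) (F (y n) (x n))
        ≤ k / 2 * (dist (g (x n)) (g (y n)) + dist (g (y n)) (g (x n))) := this
      _ = k * dist (g (x n)) (g (y n)) := by rw [dist_comm (g (y n)) (g (x n))]; ring
  have ht_step : ∀ n, t (n + 1) ≤ k * t n := by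
    intro n
    have h1' := hban (x (n + 1)) (hxA _) (x n) (hxA n) (y (n + 1)) (hyB _) (y n) (hyB n)
    have h2' := hban (x n) (hxA n) (x (n + 1)) (hxA _) (y n) (hyB n) (y (n + 1)) (hyB _)
    have e1 : dist (F (x (n + 1)) (y (n + 1))) (F (y n) (x n))
        ≤ k / 2 * (dist (g (x (n + 1))) (g (y n)) + dist (g (y (n + 1))) (g (x n))) := h1'
    have e2 : dist (F (y (n + 1)) (x (n + 1))) (F (x n) (y n))
        ≤ k / 2 * (dist (g (x (n + 1))) (g (y n)) + dist (g (y (n + 1))) (g (x n))) := by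
      rw [dist_comm]
      calc dist (F (x n) (y n)) (F (y (n + 1)) (x (n + 1)))
          ≤ k / 2 * (dist (g (x n)) (g (y (n + 1))) + dist (g (y n)) (g (x (n + 1)))) := h2'
        _ = k / 2 * (dist (g (x (n + 1))) (g (y n)) + dist (g (y (n + 1))) (g (x n))) := by
            rw [dist_comm (g (x n)), dist_comm (g (y n))]; ring
    have e1' : dist (g (x (n + 2))) (g (y (n + 1)))
        ≤ k / 2 * (dist (g (x (n + 1))) (g (y n)) + dist (g (y (n + 1))) (g (x n))) := by
      rw [← hgx (n + 1), ← hgy n] at e1; exact e1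
    have e2' : dist (g (y (n + 2))) (g (x (n + 1)))
        ≤ k / 2 * (dist (g (x (n + 1))) (g (y n)) + dist (g (y (n + 1))) (g (x n))) := by
      rw [← hgy (n + 1), ← hgx n] at e2; exact e2
    show dist (g (x (n + 2))) (g (y (n + 1))) + dist (g (y (n + 2))) (g (x (n + 1)))
        ≤ k * (dist (g (x (n + 1))) (g (y n)) + dist (g (y (n + 1))) (g (x n)))
    linarith
  have ha_geom : ∀ n, a n ≤ a 0 * k ^ n := by
    intro n
    induction n with
    | zero => simp
    | succ n ih =>
      calc a (n + 1) ≤ k * a n := ha_step n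
        _ ≤ k * (a 0 * k ^ n) := by
            exact mul_le_mul_of_nonneg_left ih hk0.le
        _ = a 0 * k ^ (n + 1) := by ring
  have ht_geom : ∀ n, t n ≤ t 0 * k ^ n := by
    intro n
    induction n with
    | zero => simp
    | succ n ih =>
      calc t (n + 1) ≤ k * t n := ht_step n
        _ ≤ k * (t 0 * k ^ n) := mul_le_mul_of_nonneg_left ih hk0.le
        _ = t 0 * k ^ (n + 1) := by ring
  set C : ℝ := t 0 + 2 * a 0 with hCdef
  have hbound : ∀ n, dist (g (x (n + 1))) (g (x n)) + dist (g (y (n + 1))) (g (y n))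
      ≤ C * k ^ n := by
    intro n
    have hx' : dist (g (x (n + 1))) (g (x n))
        ≤ dist (g (x (n + 1))) (g (y n)) + dist (g (y n)) (g (x n)) := dist_triangle _ _ _
    have hy' : dist (g (y (n + 1))) (g (y n))
        ≤ dist (g (y (n + 1))) (g (x n)) + dist (g (x n)) (g (y n)) := dist_triangle _ _ _
    have : dist (g (x (n + 1))) (g (x n)) + dist (g (y (n + 1))) (g (y n))
        ≤ t n + (dist (g (y n)) (g (x n)) + dist (g (x n)) (g (y n))) := by
      have := add_le_add hx' hy'
      simp only [htdef]
      linarith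
    have ha' : dist (g (y n)) (g (x n)) + dist (g (x n)) (g (y n)) = 2 * a n := by
      rw [dist_comm (g (y n))]; simp [hadef]; ring
    have h2a : 2 * a n ≤ 2 * (a 0 * k ^ n) := by linarith [ha_geom n]
    -- but C = t 0 + a 0; we bounded sum by t n + 2 a n ≤ (t0 + 2 a0) k^n. Adjust C.
    calc dist (g (x (n + 1))) (g (x n)) + dist (g (y (n + 1))) (g (y n))
        ≤ t n + 2 * a n := by rw [← ha']; exact this
      _ ≤ t 0 * k ^ n + 2 * (a 0 * k ^ n) := add_le_add (ht_geom n) h2a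
      _ = C * k ^ n := by rw [hCdef]; ring
  have hCnonneg : 0 ≤ C := by
    have h1 : (0:ℝ) ≤ t 0 := add_nonneg dist_nonneg dist_nonneg
    have h2 : (0:ℝ) ≤ a 0 := dist_nonneg
    linarith
  have hboundx : ∀ n, dist (g (x n)) (g (x (n + 1))) ≤ C * k ^ n := fun n => by
    rw [dist_comm]
    have := hbound n
    have := dist_nonneg (x := g (y (n + 1))) (y := g (y n))
    linarith
  have hboundy : ∀ n, dist (g (y n)) (g (y (n + 1))) ≤ C * k ^ n := fun n => by
    rw [dist_comm]
    have := hbound n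
    have := dist_nonneg (x := g (x (n + 1))) (y := g (x n))
    linarith
  have hcx : CauchySeq (fun n => g (x n)) := cauchySeq_of_le_geometric k C hk1 hboundx
  have hcy : CauchySeq (fun n => g (y n)) := cauchySeq_of_le_geometric k C hk1 hboundy
  obtain ⟨p, hp⟩ := cauchySeq_tendsto_of_complete hcx
  obtain ⟨q, hq⟩ := cauchySeq_tendsto_of_complete hcy
  -- the two limits coincide
  have hdist0 : Tendsto a atTop (𝓝 0) := by
    have hgeo : Tendsto (fun n : ℕ => a 0 * k ^ n) atTop (𝓝 0) := by
      have := tendsto_pow_atTop_nhds_zero_of_lt_one hk0.le hk1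
      simpa using this.const_mul (a 0)
    exact squeeze_zero (fun n => dist_nonneg) ha_geom hgeo
  have hpq : p = q := by
    have hd : Tendsto (fun n => dist (g (x n)) (g (y n))) atTop (𝓝 (dist p q)) := hp.dist hq
    have : dist p q = 0 := tendsto_nhds_unique hd hdist0
    exact dist_eq_zero.mp this
  have hpA : p ∈ g '' A := by
    apply hclA.mem_of_tendsto hp
    exact Eventually.of_forall fun n => ⟨x n, hxA n, rfl⟩
  have hpB : p ∈ g '' B := by
    rw [hpq]
    apply hclB.mem_of_tendsto hq
    exact Eventually.of_forall fun n => ⟨y n, hyB n, rfl⟩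
  exact ⟨p, hsc.1 hpA, hsc.2 hpB⟩
end

section
/- Let A and B be nonempty subsets of a complete metric space (X,d), g : X → X self-cyclic with respect to A and B and injective, with g(A) and g(B) closed. If F : X × X → X is a Banach type g-coupling with respect to A and B with constant k ∈ (0,1), then F and g have a unique strong coupled coincidence point in A ∩ B: there is a unique a ∈ A ∩ B with F(a,a) = g(a). -/
/-!
The Banach-type condition only compares `F` on `A × B` with `F` on `B × A`, so along the coupled
iterates `g (x (n+1)) = F (x n) (y n)`, `g (y (n+1)) = F (y n) (x n)` what contracts by the factor `k`
is the cross distance `d(g xₘ, g yₙ) + d(g yₘ, g xₙ)` between steps `m` and `n`. Its decay on the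
diagonal and on the first off-diagonal makes `g ∘ x` and `g ∘ y` Cauchy with a common limit, which
lies in the closed sets `g(A)` and `g(B)` and so, by injectivity, is `g a` for one `a ∈ A ∩ B`.
Passing to the limit gives `F a a = g a`, and two such points satisfy `d(g a, g b) ≤ k d(g a, g b)`.
-/

open Filter Topology

theorem le_pow_mul_of_forall_le_mul {f : ℕ → ℝ} {k : ℝ} (hk : 0 ≤ k)
    (h : ∀ n, f (n + 1) ≤ k * f n) (n : ℕ) : f n ≤ k ^ n * f 0 := by
  induction n with
  | zero => simp
  | succ n ih =>
    calc f (n + 1) ≤ k * f n := h n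
      _ ≤ k * (k ^ n * f 0) := mul_le_mul_of_nonneg_left ih hk
      _ = k ^ (n + 1) * f 0 := by ring

theorem exists_tendsto_of_dist_le_geometric {X : Type*} [MetricSpace X] [CompleteSpace X]
    {u v : ℕ → X} {k a c : ℝ} (hk₀ : 0 ≤ k) (hk₁ : k < 1)
    (hdiag : ∀ n, dist (u n) (v n) ≤ a * k ^ n) (hcross : ∀ n, dist (u (n + 1)) (v n) ≤ c * k ^ n) :
    ∃ p, Tendsto u atTop (𝓝 p) ∧ Tendsto v atTop (𝓝 p) := by
  have hstep : ∀ n, dist (u n) (u (n + 1)) ≤ (a + c) * k ^ n := fun n =>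
    calc dist (u n) (u (n + 1)) ≤ dist (u n) (v n) + dist (u (n + 1)) (v n) :=
          dist_triangle_right _ _ _
      _ ≤ a * k ^ n + c * k ^ n := add_le_add (hdiag n) (hcross n)
      _ = (a + c) * k ^ n := by ring
  obtain ⟨p, hp⟩ := cauchySeq_tendsto_of_complete (cauchySeq_of_le_geometric k (a + c) hk₁ hstep)
  have hdiag_lim : Tendsto (fun n => dist (u n) (v n)) atTop (𝓝 0) := by
    refine squeeze_zero (fun _ => dist_nonneg) hdiag ?_
    simpa using (tendsto_pow_atTop_nhds_zero_of_lt_one hk₀ hk₁).const_mul a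
  exact ⟨p, hp, hp.congr_dist hdiag_lim⟩

section Coupling

variable {X : Type*} {A B : Set X} {g : X → X} {F : X → X → X} {k : ℝ}

structure IsCoupledIterates (A B : Set X) (g : X → X) (F : X → X → X) (x y : ℕ → X) : Prop where
  mem_left : ∀ n, x n ∈ A
  mem_right : ∀ n, y n ∈ B
  map_left : ∀ n, g (x (n + 1)) = F (x n) (y n)
  map_right : ∀ n, g (y (n + 1)) = F (y n) (x n)

theorem exists_isCoupledIterates
    (hgc : ∀ x ∈ A, ∀ y ∈ B, F x y ∈ g '' A ∧ F y x ∈ g '' B) {x₀ y₀ : X}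
    (hx₀ : x₀ ∈ A) (hy₀ : y₀ ∈ B) : ∃ x y : ℕ → X, IsCoupledIterates A B g F x y := by
  have hnext : ∀ p : X × X, p.1 ∈ A → p.2 ∈ B →
      ∃ q : X × X, (q.1 ∈ A ∧ q.2 ∈ B) ∧ g q.1 = F p.1 p.2 ∧ g q.2 = F p.2 p.1 := by
    intro p hp₁ hp₂
    obtain ⟨⟨x', hx', hgx'⟩, ⟨y', hy', hgy'⟩⟩ := hgc p.1 hp₁ p.2 hp₂
    exact ⟨(x', y'), ⟨hx', hy'⟩, hgx', hgy'⟩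
  choose! next hnext_mem hnext_map using hnext
  set s : ℕ → X × X := fun n => next^[n] (x₀, y₀)
  have hs_succ : ∀ n, s (n + 1) = next (s n) := fun n => Function.iterate_succ_apply' _ _ _
  have hs_mem : ∀ n, (s n).1 ∈ A ∧ (s n).2 ∈ B := by
    intro n
    induction n with
    | zero => exact ⟨hx₀, hy₀⟩
    | succ n ih => rw [hs_succ]; exact hnext_mem _ ih.1 ih.2
  refine ⟨fun n => (s n).1, fun n => (s n).2,
    ⟨fun n => (hs_mem n).1, fun n => (hs_mem n).2, fun n => ?_, fun n => ?_⟩⟩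
  · rw [hs_succ]; exact (hnext_map _ (hs_mem n).1 (hs_mem n).2).1
  · rw [hs_succ]; exact (hnext_map _ (hs_mem n).1 (hs_mem n).2).2

variable [MetricSpace X]

def IsBanachTypeCoupling (A B : Set X) (g : X → X) (F : X → X → X) (k : ℝ) : Prop :=
  ∀ x ∈ A, ∀ v ∈ A, ∀ y ∈ B, ∀ u ∈ B,
    dist (F x y) (F u v) ≤ k / 2 * (dist (g x) (g u) + dist (g y) (g v))

def crossDist (g : X → X) (x y : ℕ → X) (m n : ℕ) : ℝ :=
  dist (g (x m)) (g (y n)) + dist (g (y m)) (g (x n))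

namespace IsCoupledIterates

variable {x y : ℕ → X}

theorem crossDist_succ_le (hban : IsBanachTypeCoupling A B g F k)
    (h : IsCoupledIterates A B g F x y) (m n : ℕ) :
    crossDist g x y (m + 1) (n + 1) ≤ k * crossDist g x y m n := by
  have h₁ := hban (x m) (h.mem_left m) (x n) (h.mem_left n) (y m) (h.mem_right m) (y n) (h.mem_right n)
  have h₂ := hban (x n) (h.mem_left n) (x m) (h.mem_left m) (y n) (h.mem_right n) (y m) (h.mem_right m)
  rw [dist_comm (g (x n)), dist_comm (g (y n))] at h₂
  rw [crossDist, crossDist, h.map_left, h.map_left, h.map_right, h.map_right,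
    dist_comm (F (y m) (x m))]
  linarith

theorem crossDist_add_le (hban : IsBanachTypeCoupling A B g F k) (hk : 0 ≤ k)
    (h : IsCoupledIterates A B g F x y) (m n : ℕ) :
    crossDist g x y (m + n) n ≤ k ^ n * crossDist g x y m 0 :=
  le_pow_mul_of_forall_le_mul (f := fun j => crossDist g x y (m + j) j) hk
    (fun j => h.crossDist_succ_le hban (m + j) j) n

theorem exists_tendsto [CompleteSpace X] (hban : IsBanachTypeCoupling A B g F k)
    (hk₀ : 0 ≤ k) (hk₁ : k < 1) (h : IsCoupledIterates A B g F x y) :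
    ∃ p, Tendsto (g ∘ x) atTop (𝓝 p) ∧ Tendsto (g ∘ y) atTop (𝓝 p) := by
  refine exists_tendsto_of_dist_le_geometric (a := crossDist g x y 0 0)
    (c := crossDist g x y 1 0) hk₀ hk₁ (fun n => ?_) (fun n => ?_)
  · calc dist (g (x n)) (g (y n)) ≤ crossDist g x y (0 + n) n := by
          rw [zero_add, crossDist]; exact le_add_of_nonneg_right dist_nonneg
      _ ≤ _ := by rw [mul_comm]; exact h.crossDist_add_le hban hk₀ 0 n
  · calc dist (g (x (n + 1))) (g (y n)) ≤ crossDist g x y (1 + n) n := by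
          rw [add_comm 1, crossDist]; exact le_add_of_nonneg_right dist_nonneg
      _ ≤ _ := by rw [mul_comm]; exact h.crossDist_add_le hban hk₀ 1 n

theorem apply_self_eq_of_tendsto (hban : IsBanachTypeCoupling A B g F k)
    (h : IsCoupledIterates A B g F x y) {a : X} (ha : a ∈ A ∩ B)
    (hx : Tendsto (g ∘ x) atTop (𝓝 (g a))) (hy : Tendsto (g ∘ y) atTop (𝓝 (g a))) :
    F a a = g a := by
  have hbound : ∀ n, dist (F (y n) (x n)) (F a a) ≤
      k / 2 * (dist (g (y n)) (g a) + dist (g (x n)) (g a)) := fun n => by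
    have := hban a ha.1 (x n) (h.mem_left n) a ha.2 (y n) (h.mem_right n)
    rwa [dist_comm, dist_comm (g a), dist_comm (g a)] at this
  have hbound_lim : Tendsto (fun n => k / 2 * (dist (g (y n)) (g a) + dist (g (x n)) (g a)))
      atTop (𝓝 0) := by
    simpa using ((tendsto_iff_dist_tendsto_zero.1 hy).add
      (tendsto_iff_dist_tendsto_zero.1 hx)).const_mul (k / 2)
  have hF : Tendsto (fun n => F (y n) (x n)) atTop (𝓝 (F a a)) :=
    tendsto_iff_dist_tendsto_zero.2 (squeeze_zero (fun _ => dist_nonneg) hbound hbound_lim)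
  have hg : Tendsto (fun n => F (y n) (x n)) atTop (𝓝 (g a)) := by
    simpa only [Function.comp_def, h.map_right] using hy.comp (tendsto_add_atTop_nat 1)
  exact tendsto_nhds_unique hF hg

end IsCoupledIterates

theorem IsBanachTypeCoupling.eq_of_apply_self_eq (hban : IsBanachTypeCoupling A B g F k)
    (hk : k < 1) (hg : Function.Injective g) {a b : X} (ha : a ∈ A ∩ B) (hb : b ∈ A ∩ B)
    (hFa : F a a = g a) (hFb : F b b = g b) : a = b := by
  have hle := hban a ha.1 b hb.1 a ha.2 b hb.2
  rw [hFa, hFb] at hle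
  have hd : dist (g a) (g b) = 0 := by nlinarith [dist_nonneg (x := g a) (y := g b)]
  exact hg (dist_eq_zero.1 hd)

end Coupling

theorem unique_strong_coupled_coincidence_general {X : Type*} [MetricSpace X] [CompleteSpace X]
    (A B : Set X) (hA : A.Nonempty) (hB : B.Nonempty)
    (g : X → X) (hginj : Function.Injective g)
    (hclA : IsClosed (g '' A)) (hclB : IsClosed (g '' B))
    (F : X → X → X) (k : ℝ) (hk : k ∈ Set.Ioo (0:ℝ) 1)
    (hgc : ∀ x ∈ A, ∀ y ∈ B, F x y ∈ g '' A ∩ B ∧ F y x ∈ g '' B ∩ A)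
    (hban : ∀ x ∈ A, ∀ v ∈ A, ∀ y ∈ B, ∀ u ∈ B,
      dist (F x y) (F u v) ≤ k / 2 * (dist (g x) (g u) + dist (g y) (g v))) :
    ∃! a : X, a ∈ A ∩ B ∧ F a a = g a := by
  obtain ⟨hk₀, hk₁⟩ := hk
  obtain ⟨x₀, hx₀⟩ := hA
  obtain ⟨y₀, hy₀⟩ := hB
  obtain ⟨x, y, hxy⟩ := exists_isCoupledIterates
    (fun x hx y hy => ⟨(hgc x hx y hy).1.1, (hgc x hx y hy).2.1⟩) hx₀ hy₀
  obtain ⟨p, hpx, hpy⟩ := hxy.exists_tendsto hban hk₀.le hk₁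
  obtain ⟨a, haA, rfl⟩ := hclA.mem_of_tendsto hpx
    (Eventually.of_forall fun n => Set.mem_image_of_mem g (hxy.mem_left n))
  obtain ⟨b, hbB, hba⟩ := hclB.mem_of_tendsto hpy
    (Eventually.of_forall fun n => Set.mem_image_of_mem g (hxy.mem_right n))
  have ha : a ∈ A ∩ B := ⟨haA, hginj hba ▸ hbB⟩
  have hFa : F a a = g a := hxy.apply_self_eq_of_tendsto hban ha hpx hpy
  exact ⟨a, ⟨ha, hFa⟩, fun b ⟨hb, hFb⟩ =>
    IsBanachTypeCoupling.eq_of_apply_self_eq hban hk₁ hginj hb ha hFb hFa⟩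

theorem unique_strong_coupled_coincidence {X : Type*} [MetricSpace X] [CompleteSpace X]
    (A B : Set X) (hA : A.Nonempty) (hB : B.Nonempty)
    (g : X → X) (hginj : Function.Injective g)
    (hsc : g '' A ⊆ A ∧ g '' B ⊆ B)
    (hclA : IsClosed (g '' A)) (hclB : IsClosed (g '' B))
    (F : X → X → X) (k : ℝ) (hk : k ∈ Set.Ioo (0:ℝ) 1)
    (hgc : ∀ x ∈ A, ∀ y ∈ B, F x y ∈ g '' A ∩ B ∧ F y x ∈ g '' B ∩ A)
    (hban : ∀ x ∈ A, ∀ v ∈ A, ∀ y ∈ B, ∀ u ∈ B,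
      dist (F x y) (F u v) ≤ k / 2 * (dist (g x) (g u) + dist (g y) (g v))) :
    ∃! a : X, a ∈ A ∩ B ∧ F a a = g a :=
  unique_strong_coupled_coincidence_general A B hA hB g hginj hclA hclB F k hk hgc hban
end

section
/- Uniqueness of strong coupled coincidence points: if (X,d) is a metric space, g : X → X is injective, F : X × X → X satisfies d(F(x,y),F(u,v)) ≤ (k/2)[d(gx,gu) + d(gy,gv)] for some k ∈ (0,1) for all x,v ∈ A and y,u ∈ B, and l, m ∈ A ∩ B satisfy F(l,l) = g(l) and F(m,m) = g(m), then l = m. -/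
theorem strong_coupled_coincidence_unique {X : Type*} [MetricSpace X]
    (A B : Set X) (g : X → X) (hginj : Function.Injective g)
    (F : X → X → X) (k : ℝ) (hk : k ∈ Set.Ioo (0:ℝ) 1)
    (hban : ∀ x ∈ A, ∀ v ∈ A, ∀ y ∈ B, ∀ u ∈ B,
      dist (F x y) (F u v) ≤ k / 2 * (dist (g x) (g u) + dist (g y) (g v)))
    (l m : X) (hl : l ∈ A ∩ B) (hm : m ∈ A ∩ B)
    (hfl : F l l = g l) (hfm : F m m = g m) :
    l = m := by
  have h := hban l hl.1 m hm.1 l hl.2 m hm.2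
  rw [hfl, hfm] at h
  have hd : dist (g l) (g m) = 0 := by nlinarith [dist_nonneg (x := g l) (y := g m), hk.1, hk.2]
  exact hginj (dist_eq_zero.mp hd)
end

section
/- Iterates cross estimate: Under the same setup (d(F(x,y),F(u,v)) ≤ (k/2)[d(gx,gu)+d(gy,gv)] for x,v ∈ A, y,u ∈ B, k ∈ (0,1), sequences xₙ ∈ A, yₙ ∈ B with g(xₙ₊₁)=F(xₙ,yₙ), g(yₙ₊₁)=F(yₙ,xₙ)), one has d(gxₙ, gyₙ₊₁) ≤ (kⁿ/2)[d(gx₀,gy₁) + d(gy₀,gx₁)] and d(gyₙ, gxₙ₊₁) ≤ (kⁿ/2)[d(gx₀,gy₁) + d(gy₀,gx₁)] for all n ≥ 1. -/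
theorem iterates_cross_estimate {X : Type*} [MetricSpace X]
    (A B : Set X) (F : X → X → X) (g : X → X) (k : ℝ) (hk : k ∈ Set.Ioo (0:ℝ) 1)
    (hban : ∀ x ∈ A, ∀ v ∈ A, ∀ y ∈ B, ∀ u ∈ B,
      dist (F x y) (F u v) ≤ k / 2 * (dist (g x) (g u) + dist (g y) (g v)))
    (x y : ℕ → X) (hx : ∀ n, x n ∈ A) (hy : ∀ n, y n ∈ B)
    (hgx : ∀ n, g (x (n + 1)) = F (x n) (y n))
    (hgy : ∀ n, g (y (n + 1)) = F (y n) (x n)) :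
    ∀ n ≥ 1,
      dist (g (x n)) (g (y (n + 1))) ≤
        k ^ n / 2 * (dist (g (x 0)) (g (y 1)) + dist (g (y 0)) (g (x 1))) ∧
      dist (g (y n)) (g (x (n + 1))) ≤
        k ^ n / 2 * (dist (g (x 0)) (g (y 1)) + dist (g (y 0)) (g (x 1))) := by
  obtain ⟨hk0, hk1⟩ := hk
  have key : ∀ n : ℕ, dist (g (x (n + 1))) (g (y (n + 2))) ≤
      k / 2 * (dist (g (x n)) (g (y (n + 1))) + dist (g (y n)) (g (x (n + 1)))) := by
    intro n
    have h := hban (x n) (hx n) (x (n + 1)) (hx _) (y n) (hy n) (y (n + 1)) (hy _)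
    rwa [← hgx n, ← hgy (n + 1)] at h
  have key2 : ∀ n : ℕ, dist (g (y (n + 1))) (g (x (n + 2))) ≤
      k / 2 * (dist (g (x n)) (g (y (n + 1))) + dist (g (y n)) (g (x (n + 1)))) := by
    intro n
    have h := hban (x (n + 1)) (hx _) (x n) (hx n) (y (n + 1)) (hy _) (y n) (hy n)
    rw [← hgx (n + 1), ← hgy n] at h
    calc dist (g (y (n + 1))) (g (x (n + 2)))
        = dist (g (x (n + 2))) (g (y (n + 1))) := dist_comm _ _
      _ ≤ k / 2 * (dist (g (x (n+1))) (g (y n)) + dist (g (y (n+1))) (g (x n))) := h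
      _ = k / 2 * (dist (g (x n)) (g (y (n + 1))) + dist (g (y n)) (g (x (n + 1)))) := by
          rw [dist_comm (g (x (n+1))), dist_comm (g (y (n+1)))]; ring
  intro n hn
  induction n, hn using Nat.le_induction with
  | base =>
    refine ⟨?_, ?_⟩
    · simpa using key 0
    · simpa using key2 0
  | succ n hn ih =>
    obtain ⟨ih1, ih2⟩ := ih
    set S := dist (g (x 0)) (g (y 1)) + dist (g (y 0)) (g (x 1)) with hS
    have hkS : k / 2 * (dist (g (x n)) (g (y (n + 1))) + dist (g (y n)) (g (x (n + 1))))
        ≤ k ^ (n + 1) / 2 * S := by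
      calc k / 2 * (dist (g (x n)) (g (y (n + 1))) + dist (g (y n)) (g (x (n + 1))))
          ≤ k / 2 * (k ^ n / 2 * S + k ^ n / 2 * S) :=
            mul_le_mul_of_nonneg_left (add_le_add ih1 ih2) (by positivity)
        _ = k / 2 * (k ^ n * S) := by ring
        _ ≤ k ^ (n + 1) / 2 * S := le_of_eq (by ring)
    exact ⟨(key n).trans hkS, (key2 n).trans hkS⟩
end

section
/- Cauchy property of the iterate sequences: Under the same setup as above (Banach type g-contractive inequality with k ∈ (0,1) and sequences g(xₙ₊₁) = F(xₙ,yₙ), g(yₙ₊₁) = F(yₙ,xₙ) with xₙ ∈ A, yₙ ∈ B), the sequences (g(xₙ)) and (g(yₙ)) are Cauchy sequences in X. -/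
theorem iterates_cauchy {X : Type*} [MetricSpace X]
    (A B : Set X) (g : X → X) (hsc : g '' A ⊆ A ∧ g '' B ⊆ B)
    (F : X → X → X) (k : ℝ) (hk : k ∈ Set.Ioo (0:ℝ) 1)
    (hban : ∀ x ∈ A, ∀ v ∈ A, ∀ y ∈ B, ∀ u ∈ B,
      dist (F x y) (F u v) ≤ k / 2 * (dist (g x) (g u) + dist (g y) (g v)))
    (x y : ℕ → X) (hx : ∀ n, x n ∈ A) (hy : ∀ n, y n ∈ B)
    (hgx : ∀ n, g (x (n + 1)) = F (x n) (y n))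
    (hgy : ∀ n, g (y (n + 1)) = F (y n) (x n)) :
    CauchySeq (fun n => g (x n)) ∧ CauchySeq (fun n => g (y n)) := by
  obtain ⟨hk0, hk1⟩ := hk
  set C : ℕ → ℝ := fun n => dist (g (x n)) (g (y n)) with hCdef
  set S : ℕ → ℝ := fun n =>
    dist (g (x (n+1))) (g (y n)) + dist (g (y (n+1))) (g (x n)) with hSdef
  have hC : ∀ n, C n ≤ k ^ n * C 0 := by
    intro n
    induction n with
    | zero => simp
    | succ n ih =>
      have h1 : C (n+1) ≤ k * C n := by
        have h := hban (x n) (hx n) (x n) (hx n) (y n) (hy n) (y n) (hy n)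
        simp only [hCdef, hgx n, hgy n]
        calc dist (F (x n) (y n)) (F (y n) (x n))
            ≤ k / 2 * (dist (g (x n)) (g (y n)) + dist (g (y n)) (g (x n))) := h
          _ = k * dist (g (x n)) (g (y n)) := by rw [dist_comm (g (y n))]; ring
      calc C (n+1) ≤ k * C n := h1
        _ ≤ k * (k ^ n * C 0) := by
            exact mul_le_mul_of_nonneg_left ih hk0.le
        _ = k ^ (n+1) * C 0 := by ring
  have hS : ∀ n, S n ≤ k ^ n * S 0 := by
    intro n
    induction n with
    | zero => simp
    | succ n ih =>
      have h1 : dist (g (x (n+2))) (g (y (n+1)))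
          ≤ k / 2 * (dist (g (x (n+1))) (g (y n)) + dist (g (y (n+1))) (g (x n))) := by
        have h := hban (x (n+1)) (hx _) (x n) (hx _) (y (n+1)) (hy _) (y n) (hy _)
        rwa [← hgx (n+1), ← hgy n] at h
      have h2 : dist (g (y (n+2))) (g (x (n+1)))
          ≤ k / 2 * (dist (g (x n)) (g (y (n+1))) + dist (g (y n)) (g (x (n+1)))) := by
        have h := hban (x n) (hx _) (x (n+1)) (hx _) (y n) (hy _) (y (n+1)) (hy _)
        rw [← hgy (n+1), ← hgx n, dist_comm] at h
        exact h
      have h3 : S (n+1) ≤ k * S n := by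
        simp only [hSdef]
        have e1 : dist (g (x n)) (g (y (n+1))) = dist (g (y (n+1))) (g (x n)) :=
          dist_comm _ _
        have e2 : dist (g (y n)) (g (x (n+1))) = dist (g (x (n+1))) (g (y n)) :=
          dist_comm _ _
        calc dist (g (x (n+1+1))) (g (y (n+1))) + dist (g (y (n+1+1))) (g (x (n+1)))
            ≤ k / 2 * (dist (g (x (n+1))) (g (y n)) + dist (g (y (n+1))) (g (x n)))
              + k / 2 * (dist (g (x n)) (g (y (n+1))) + dist (g (y n)) (g (x (n+1)))) :=
              add_le_add h1 h2
          _ = k * (dist (g (x (n+1))) (g (y n)) + dist (g (y (n+1))) (g (x n))) := by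
              rw [e1, e2]; ring
      calc S (n+1) ≤ k * S n := h3
        _ ≤ k * (k ^ n * S 0) := mul_le_mul_of_nonneg_left ih hk0.le
        _ = k ^ (n+1) * S 0 := by ring
  constructor
  · apply cauchySeq_of_le_geometric k (C 0 + S 0) hk1
    intro n
    have t : dist (g (x n)) (g (x (n+1)))
        ≤ dist (g (x n)) (g (y n)) + dist (g (x (n+1))) (g (y n)) := by
      rw [dist_comm (g (x (n+1)))]
      exact dist_triangle _ _ _
    have h1 : dist (g (x (n+1))) (g (y n)) ≤ S n :=
      le_add_of_nonneg_right dist_nonneg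
    calc dist (g (x n)) (g (x (n+1)))
        ≤ C n + S n := le_trans t (add_le_add le_rfl h1)
      _ ≤ k ^ n * C 0 + k ^ n * S 0 := add_le_add (hC n) (hS n)
      _ = (C 0 + S 0) * k ^ n := by ring
  · apply cauchySeq_of_le_geometric k (C 0 + S 0) hk1
    intro n
    have t : dist (g (y n)) (g (y (n+1)))
        ≤ dist (g (x n)) (g (y n)) + dist (g (y (n+1))) (g (x n)) := by
      rw [dist_comm (g (x n)) (g (y n)), dist_comm (g (y (n+1)))]
      exact dist_triangle _ _ _
    have h2 : dist (g (y (n+1))) (g (x n)) ≤ S n :=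
      le_add_of_nonneg_left dist_nonneg
    calc dist (g (y n)) (g (y (n+1)))
        ≤ C n + S n := le_trans t (add_le_add le_rfl h2)
      _ ≤ k ^ n * C 0 + k ^ n * S 0 := add_le_add (hC n) (hS n)
      _ = (C 0 + S 0) * k ^ n := by ring
end

section
/- Limits coincide: Under the same setup, if g(xₙ) → u and g(yₙ) → v in X, then u = v. -/
theorem limits_coincide {X : Type*} [MetricSpace X]
    (A B : Set X) (g : X → X) (hsc : g '' A ⊆ A ∧ g '' B ⊆ B)
    (F : X → X → X) (k : ℝ) (hk : k ∈ Set.Ioo (0:ℝ) 1)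
    (hban : ∀ x ∈ A, ∀ v ∈ A, ∀ y ∈ B, ∀ u ∈ B,
      dist (F x y) (F u v) ≤ k / 2 * (dist (g x) (g u) + dist (g y) (g v)))
    (x y : ℕ → X) (hx : ∀ n, x n ∈ A) (hy : ∀ n, y n ∈ B)
    (hgx : ∀ n, g (x (n + 1)) = F (x n) (y n))
    (hgy : ∀ n, g (y (n + 1)) = F (y n) (x n))
    (u v : X)
    (hu : Filter.Tendsto (fun n => g (x n)) Filter.atTop (nhds u))
    (hv : Filter.Tendsto (fun n => g (y n)) Filter.atTop (nhds v)) :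
    u = v := by
  obtain ⟨hk0, hk1⟩ := hk
  set d : ℕ → ℝ := fun n => dist (g (x n)) (g (y n)) with hd
  have hstep : ∀ n, d (n + 1) ≤ k * d n := by
    intro n
    have h := hban (x n) (hx n) (x n) (hx n) (y n) (hy n) (y n) (hy n)
    simp only [hd]
    rw [hgx n, hgy n]
    calc dist (F (x n) (y n)) (F (y n) (x n))
        ≤ k / 2 * (dist (g (x n)) (g (y n)) + dist (g (y n)) (g (x n))) := h
      _ = k * dist (g (x n)) (g (y n)) := by rw [dist_comm (g (y n))]; ring
  have hpow : ∀ n, d n ≤ k ^ n * d 0 := by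
    intro n
    induction n with
    | zero => simp
    | succ m ih =>
      calc d (m + 1) ≤ k * d m := hstep m
        _ ≤ k * (k ^ m * d 0) := by
            exact mul_le_mul_of_nonneg_left ih hk0.le
        _ = k ^ (m + 1) * d 0 := by ring
  have hd0 : Filter.Tendsto d Filter.atTop (nhds 0) := by
    have h1 : Filter.Tendsto (fun n => k ^ n * d 0) Filter.atTop (nhds 0) := by
      have := tendsto_pow_atTop_nhds_zero_of_lt_one hk0.le hk1
      simpa using this.mul_const (d 0)
    refine squeeze_zero (fun n => dist_nonneg) hpow h1
  have hduv : Filter.Tendsto d Filter.atTop (nhds (dist u v)) :=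
    Filter.Tendsto.dist hu hv
  have : dist u v = 0 := tendsto_nhds_unique hduv hd0
  exact dist_eq_zero.mp this
end

section
/- If F : X × X → X is a Banach type coupling with respect to nonempty subsets A and B of a metric space X (with constant k ∈ (0,1)) and (x,y) and (u,v) are coupled fixed points of F with x,v ∈ A, y,u ∈ B, then x = y = u = v; in particular any coupled fixed point (x,y) with x ∈ A, y ∈ B of a Banach type coupling satisfies x = y. -/
theorem coupled_fixed_points_coincide {X : Type*} [MetricSpace X]
    (A B : Set X) (hA : A.Nonempty) (hB : B.Nonempty)
    (F : X → X → X) (k : ℝ) (hk : k ∈ Set.Ioo (0:ℝ) 1)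
    (hcoup : ∀ x ∈ A, ∀ y ∈ B, F x y ∈ B ∧ F y x ∈ A)
    (hban : ∀ x ∈ A, ∀ v ∈ A, ∀ y ∈ B, ∀ u ∈ B,
      dist (F x y) (F u v) ≤ k / 2 * (dist x u + dist y v))
    (x y u v : X) (hx : x ∈ A) (hy : y ∈ B) (hu : u ∈ B) (hv : v ∈ A)
    (hxy : F x y = x ∧ F y x = y) (huv : F u v = u ∧ F v u = v) :
    x = y ∧ y = u ∧ u = v := by
  obtain ⟨hk0, hk1⟩ := hk
  obtain ⟨hx1, hx2⟩ := hxy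
  obtain ⟨hu1, hu2⟩ := huv
  have h1 := hban x hx v hv y hy u hu
  rw [hx1, hu1] at h1
  have h2 := hban v hv x hx u hu y hy
  rw [hu2, hx2] at h2
  have hD : dist x u + dist y v ≤ k * (dist x u + dist y v) := by
    have := dist_comm v y
    have := dist_comm u x
    nlinarith [h1, h2]
  have hD0 : dist x u + dist y v = 0 := by
    nlinarith [dist_nonneg (x := x) (y := u), dist_nonneg (x := y) (y := v)]
  have hxu : x = u := by
    have : dist x u = 0 := by nlinarith [dist_nonneg (x := x) (y := u), dist_nonneg (x := y) (y := v)]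
    exact dist_eq_zero.mp this
  have hyv : y = v := by
    have : dist y v = 0 := by nlinarith [dist_nonneg (x := x) (y := u), dist_nonneg (x := y) (y := v)]
    exact dist_eq_zero.mp this
  have h3 := hban x hx x hx y hy y hy
  rw [hx1, hx2] at h3
  have hxy' : x = y := by
    have : dist x y = 0 := by nlinarith [dist_nonneg (x := x) (y := y), dist_comm y x]
    exact dist_eq_zero.mp this
  refine ⟨hxy', hxy'.symm.trans hxu, ?_⟩
  rw [← hxu, ← hyv]; exact hxy'
end

section
/- Symmetry estimate along iterates: under the setup with g(xₙ₊₁) = F(xₙ,yₙ), g(yₙ₊₁) = F(yₙ,xₙ), xₙ ∈ A, yₙ ∈ B, and the Banach type g-inequality with constant k ∈ (0,1), the combined distance satisfies d(gxₙ, gxₙ₊₁) + d(gyₙ, gyₙ₊₁) ≤ 2kⁿ d(gx₀, gy₀) + kⁿ [d(gx₀, gy₁) + d(gy₀, gx₁)] for all n ≥ 1. -/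
theorem symmetry_estimate_iterates {X : Type*} [MetricSpace X]
    (A B : Set X) (g : X → X) (hsc : g '' A ⊆ A ∧ g '' B ⊆ B)
    (F : X → X → X) (k : ℝ) (hk : k ∈ Set.Ioo (0:ℝ) 1)
    (hban : ∀ x ∈ A, ∀ v ∈ A, ∀ y ∈ B, ∀ u ∈ B,
      dist (F x y) (F u v) ≤ k / 2 * (dist (g x) (g u) + dist (g y) (g v)))
    (x y : ℕ → X) (hx : ∀ n, x n ∈ A) (hy : ∀ n, y n ∈ B)
    (hgx : ∀ n, g (x (n + 1)) = F (x n) (y n))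
    (hgy : ∀ n, g (y (n + 1)) = F (y n) (x n)) :
    ∀ n ≥ 1,
      dist (g (x n)) (g (x (n + 1))) + dist (g (y n)) (g (y (n + 1))) ≤
        2 * k ^ n * dist (g (x 0)) (g (y 0)) +
          k ^ n * (dist (g (x 0)) (g (y 1)) + dist (g (y 0)) (g (x 1))) := by
  obtain ⟨hk0, hk1⟩ := hk
  have hQ : ∀ n, dist (g (x n)) (g (y n)) ≤ k ^ n * dist (g (x 0)) (g (y 0)) := by
    intro n
    induction n with
    | zero => simp
    | succ n ih =>
      have h1 : dist (g (x (n+1))) (g (y (n+1))) ≤ k * dist (g (x n)) (g (y n)) := by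
        rw [hgx, hgy]
        calc dist (F (x n) (y n)) (F (y n) (x n))
            ≤ k / 2 * (dist (g (x n)) (g (y n)) + dist (g (y n)) (g (x n))) :=
              hban _ (hx n) _ (hx n) _ (hy n) _ (hy n)
          _ = k * dist (g (x n)) (g (y n)) := by rw [dist_comm (g (y n))]; ring
      calc dist (g (x (n+1))) (g (y (n+1))) ≤ k * dist (g (x n)) (g (y n)) := h1
        _ ≤ k * (k ^ n * dist (g (x 0)) (g (y 0))) :=
            mul_le_mul_of_nonneg_left ih hk0.le
        _ = k ^ (n+1) * dist (g (x 0)) (g (y 0)) := by ring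
  have hP : ∀ n, dist (g (x n)) (g (y (n+1))) + dist (g (y n)) (g (x (n+1))) ≤
      k ^ n * (dist (g (x 0)) (g (y 1)) + dist (g (y 0)) (g (x 1))) := by
    intro n
    induction n with
    | zero => simp
    | succ n ih =>
      have ha : dist (g (x (n+1))) (g (y (n+2))) ≤
          k / 2 * (dist (g (x n)) (g (y (n+1))) + dist (g (y n)) (g (x (n+1)))) :=
        calc dist (g (x (n+1))) (g (y (n+2)))
            = dist (F (x n) (y n)) (F (y (n+1)) (x (n+1))) := by rw [hgx n, hgy (n+1)]
          _ ≤ _ := hban _ (hx n) _ (hx (n+1)) _ (hy n) _ (hy (n+1))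
      have hb : dist (g (y (n+1))) (g (x (n+2))) ≤
          k / 2 * (dist (g (x n)) (g (y (n+1))) + dist (g (y n)) (g (x (n+1)))) := by
        calc dist (g (y (n+1))) (g (x (n+2)))
            = dist (F (x (n+1)) (y (n+1))) (F (y n) (x n)) := by
              rw [hgy n, hgx (n+1), dist_comm]
          _
            ≤ k / 2 * (dist (g (x (n+1))) (g (y n)) + dist (g (y (n+1))) (g (x n))) :=
              hban _ (hx (n+1)) _ (hx n) _ (hy (n+1)) _ (hy n)
          _ = k / 2 * (dist (g (x n)) (g (y (n+1))) + dist (g (y n)) (g (x (n+1)))) := by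
              rw [dist_comm (g (x (n+1))), dist_comm (g (y (n+1)))]; ring
      have h2 : dist (g (x (n+1))) (g (y (n+2))) + dist (g (y (n+1))) (g (x (n+2))) ≤
          k * (dist (g (x n)) (g (y (n+1))) + dist (g (y n)) (g (x (n+1)))) := by
        linarith
      calc dist (g (x (n+1))) (g (y (n+2))) + dist (g (y (n+1))) (g (x (n+2)))
          ≤ k * (dist (g (x n)) (g (y (n+1))) + dist (g (y n)) (g (x (n+1)))) := h2
        _ ≤ k * (k ^ n * (dist (g (x 0)) (g (y 1)) + dist (g (y 0)) (g (x 1)))) :=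
            mul_le_mul_of_nonneg_left ih hk0.le
        _ = k ^ (n+1) * (dist (g (x 0)) (g (y 1)) + dist (g (y 0)) (g (x 1))) := by ring
  intro n _
  have t1 : dist (g (x n)) (g (x (n+1))) ≤
      dist (g (x n)) (g (y n)) + dist (g (y n)) (g (x (n+1))) := dist_triangle _ _ _
  have t2 : dist (g (y n)) (g (y (n+1))) ≤
      dist (g (y n)) (g (x n)) + dist (g (x n)) (g (y (n+1))) := dist_triangle _ _ _
  have hc : dist (g (y n)) (g (x n)) = dist (g (x n)) (g (y n)) := dist_comm _ _
  have := hQ n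
  have := hP n
  linarith
end
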